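/- Let G be a finite simple connected graph with m vertices, m ≥ 4. Then every binomial in the universal Gröbner basis of the toric ideal I_G has total degree at most m − 2. -/

import Mathlib

open MvPolynomial

noncomputable section

/-! ### Term orders, initial terms, (reduced) Gröbner bases, universal Gröbner basis -/

/-- A term order on the monomials (exponent vectors) in variables indexed by `σ`:
a linear order for which `0` is least and which is compatible with addition. -/
structure TermOrder (σ : Type*) where
  lo : LinearOrder (σ →₀ ℕ)
  zero_min : ∀ u : σ →₀ ℕ, lo.le 0 u
  add_right : ∀ u v w : σ →₀ ℕ, lo.le u v → lo.le (u + w) (v + w)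

variable {σ : Type*} {K : Type*} [Field K]

/-- The leading (largest) exponent of a polynomial with respect to a term order
(junk value `0` if `f = 0`). -/
def TermOrder.leadExp (t : TermOrder σ) (f : MvPolynomial σ K) : σ →₀ ℕ :=
  haveI := Classical.propDecidable (f = 0)
  if h : f = 0 then 0
  else @Finset.max' _ t.lo f.support
    (Finset.nonempty_iff_ne_empty.mpr fun he => h (MvPolynomial.support_eq_empty.mp he))

/-- The initial term of a polynomial with respect to a term order. -/
def TermOrder.initial (t : TermOrder σ) (f : MvPolynomial σ K) : MvPolynomial σ K :=
  monomial (t.leadExp f) (f.coeff (t.leadExp f))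

/-- `𝒢` is a Gröbner basis of `I` w.r.t. the term order `t`. -/
def IsGroebnerBasis (t : TermOrder σ) (I : Ideal (MvPolynomial σ K))
    (𝒢 : Finset (MvPolynomial σ K)) : Prop :=
  (𝒢 : Set (MvPolynomial σ K)) ⊆ (I : Set (MvPolynomial σ K)) ∧
    Ideal.span (t.initial '' (𝒢 : Set (MvPolynomial σ K))) =
      Ideal.span (t.initial '' (I : Set (MvPolynomial σ K)))

/-- `𝒢` is a reduced Gröbner basis of `I` w.r.t. `t`: a Gröbner basis, all of whose elements
are monic, and no monomial occurring in an element of `𝒢` is divisible by the initial term of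
a different element of `𝒢`. -/
def IsReducedGroebnerBasis (t : TermOrder σ) (I : Ideal (MvPolynomial σ K))
    (𝒢 : Finset (MvPolynomial σ K)) : Prop :=
  IsGroebnerBasis t I 𝒢 ∧
    (∀ g ∈ 𝒢, g.coeff (t.leadExp g) = 1) ∧
    (∀ g ∈ 𝒢, ∀ g' ∈ 𝒢, g' ≠ g → ∀ u ∈ g.support, ¬ t.leadExp g' ≤ u)

/-- The universal Gröbner basis of `I`: the union of all reduced Gröbner bases of `I`
over all term orders. -/
def UniversalGB (I : Ideal (MvPolynomial σ K)) : Set (MvPolynomial σ K) :=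
  {f | ∃ (t : TermOrder σ) (𝒢 : Finset (MvPolynomial σ K)),
    IsReducedGroebnerBasis t I 𝒢 ∧ f ∈ 𝒢}

/-! ### Binomials, primitive binomials (Graver basis), circuits -/

/-- The binomial `x^u - x^v`. -/
def binom (K : Type*) [Field K] {σ : Type*} (u v : σ →₀ ℕ) : MvPolynomial σ K :=
  monomial u 1 - monomial v 1

/-- `f` is a primitive binomial of `I`: `f = x^u - x^v ∈ I` and there is no other binomial
`x^w - x^z ∈ I` with `x^w ∣ x^u` and `x^z ∣ x^v`.  The set of primitive binomials of `I`
is the Graver basis of `I`. -/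
def IsPrimitiveBinomial (I : Ideal (MvPolynomial σ K)) (f : MvPolynomial σ K) : Prop :=
  ∃ u v : σ →₀ ℕ, u ≠ v ∧ f = binom K u v ∧ f ∈ I ∧
    ∀ w z : σ →₀ ℕ, w ≠ z → binom K w z ∈ I → w ≤ u → z ≤ v → w = u ∧ z = v

/-- `f` is a circuit of `I`: an irreducible binomial of `I` whose support (set of variables
occurring in it) is minimal among the supports of nonzero binomials of `I`. -/
def IsCircuitBinomial (I : Ideal (MvPolynomial σ K)) (f : MvPolynomial σ K) : Prop :=
  (∃ u v : σ →₀ ℕ, u ≠ v ∧ f = binom K u v) ∧ f ∈ I ∧ Irreducible f ∧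
    ∀ g : MvPolynomial σ K, (∃ u v : σ →₀ ℕ, u ≠ v ∧ g = binom K u v) → g ∈ I →
      g.vars ⊆ f.vars → g.vars = f.vars

/-- The toric ideal of a vector configuration `A = (a_1, …, a_m) ⊆ ℕ^n`: the ideal generated
by all binomials `x^u - x^v` with `Σ uᵢ aᵢ = Σ vᵢ aᵢ`. -/
def toricIdealOfConfig (K : Type*) [Field K] {m n : ℕ} (A : Fin m → Fin n → ℕ) :
    Ideal (MvPolynomial (Fin m) K) :=
  Ideal.span {f | ∃ u v : Fin m →₀ ℕ,
    f = binom K u v ∧ (∑ i, u i • A i) = ∑ i, v i • A i}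

/-! ### Toric ideals of graphs -/

variable {V : Type*}

/-- The image `x_u * x_v` of an edge `e = {u, v}`. -/
def edgeImage (K : Type*) [Field K] {V : Type*} (e : Sym2 V) : MvPolynomial V K :=
  Sym2.lift ⟨fun a b => X a * X b, fun a b => mul_comm _ _⟩ e

/-- The toric ideal `I_G` of a graph `G`: the kernel of the `K`-algebra map
`K[e : e ∈ E(G)] → K[x_v : v ∈ V(G)]`, `e = {u,v} ↦ x_u x_v`. -/
def graphToricIdeal (K : Type*) [Field K] (G : SimpleGraph V) :
    Ideal (MvPolynomial G.edgeSet K) :=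
  RingHom.ker (MvPolynomial.aeval
    (fun e : G.edgeSet => edgeImage K (e : Sym2 V)) :
      MvPolynomial G.edgeSet K →ₐ[K] MvPolynomial V K).toRingHom

/-- An even closed walk `(v_0, v_1, …, v_{2q} = v_0)` in a graph `G`;
edges and vertices may repeat. -/
structure EvenClosedWalk (G : SimpleGraph V) where
  q : ℕ
  verts : ℕ → V
  adj : ∀ i, i < 2 * q → G.Adj (verts i) (verts (i + 1))
  closed : verts (2 * q) = verts 0

namespace EvenClosedWalk

variable {G : SimpleGraph V}

/-- The `i`-th edge of the walk, as an element of the edge set of `G`. -/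
def edge (w : EvenClosedWalk G) (i : ℕ) (h : i < 2 * w.q) : G.edgeSet :=
  ⟨s(w.verts i, w.verts (i + 1)), w.adj i h⟩

/-- The exponent vector `w⁺` of the monomial `E⁺(w)`, the product of the edges of `w`
in odd position (`1`-indexed). -/
def plusExp (w : EvenClosedWalk G) : G.edgeSet →₀ ℕ :=
  ∑ k : Fin w.q, Finsupp.single (w.edge (2 * (k : ℕ)) (by have := k.isLt; omega)) 1

/-- The exponent vector `w⁻` of the monomial `E⁻(w)`, the product of the edges of `w`
in even position (`1`-indexed). -/
def minusExp (w : EvenClosedWalk G) : G.edgeSet →₀ ℕ :=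
  ∑ k : Fin w.q, Finsupp.single (w.edge (2 * (k : ℕ) + 1) (by have := k.isLt; omega)) 1

end EvenClosedWalk

/-- The monomial `E⁺(w)`. -/
def Eplus (K : Type*) [Field K] {G : SimpleGraph V} (w : EvenClosedWalk G) :
    MvPolynomial G.edgeSet K :=
  monomial w.plusExp 1

/-- The monomial `E⁻(w)`. -/
def Eminus (K : Type*) [Field K] {G : SimpleGraph V} (w : EvenClosedWalk G) :
    MvPolynomial G.edgeSet K :=
  monomial w.minusExp 1

/-- The binomial `B_w = E⁺(w) - E⁻(w)` of an even closed walk. -/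
def Bw (K : Type*) [Field K] {G : SimpleGraph V} (w : EvenClosedWalk G) :
    MvPolynomial G.edgeSet K :=
  binom K w.plusExp w.minusExp

namespace EvenClosedWalk

variable {G : SimpleGraph V}

/-- The number of positions of the walk at which the edge `e` appears. -/
def count [DecidableEq V] (w : EvenClosedWalk G) (e : Sym2 V) : ℕ :=
  ((Finset.range (2 * w.q)).filter fun i => e = s(w.verts i, w.verts (i + 1))).card

/-- The subgraph `𝐰` of `G` spanned by the edges of the walk `w`. -/
def graph (w : EvenClosedWalk G) : SimpleGraph V :=
  SimpleGraph.fromEdgeSet {e | ∃ i, ∃ _ : i < 2 * w.q, e = s(w.verts i, w.verts (i + 1))}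

/-- The set `w⁺` of edges of `w` in odd position (`1`-indexed). -/
def plusEdges (w : EvenClosedWalk G) : Set (Sym2 V) :=
  {e | ∃ k, ∃ _ : k < w.q, e = s(w.verts (2 * k), w.verts (2 * k + 1))}

/-- The set `w⁻` of edges of `w` in even position (`1`-indexed). -/
def minusEdges (w : EvenClosedWalk G) : Set (Sym2 V) :=
  {e | ∃ k, ∃ _ : k < w.q, e = s(w.verts (2 * k + 1), w.verts (2 * k + 2))}

/-- An even closed walk is primitive if it is nontrivial and there is no even closed
subwalk `ξ` of smaller length with `E⁺(ξ) ∣ E⁺(w)` and `E⁻(ξ) ∣ E⁻(w)`. -/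
def IsPrimitive (w : EvenClosedWalk G) : Prop :=
  0 < w.q ∧ ∀ ξ : EvenClosedWalk G, 0 < ξ.q → ξ.q < w.q →
    ¬(ξ.plusExp ≤ w.plusExp ∧ ξ.minusExp ≤ w.minusExp)

/-- The walk `w` is a cycle: it visits no vertex twice. -/
def IsCycle (w : EvenClosedWalk G) : Prop :=
  2 ≤ w.q ∧ ∀ i j, i < 2 * w.q → j < 2 * w.q → w.verts i = w.verts j → i = j

end EvenClosedWalk

/-! ### Cut vertices, cut edges, blocks, sinks -/

/-- `v` is a cut vertex of `H`: removing `v` (and the edges through it) disconnects two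
vertices different from `v` that were connected in `H`. -/
def IsCutVertex (H : SimpleGraph V) (v : V) : Prop :=
  ∃ a b, a ≠ v ∧ b ≠ v ∧ H.Reachable a b ∧
    ¬(SimpleGraph.fromEdgeSet {e | e ∈ H.edgeSet ∧ v ∉ e}).Reachable a b

/-- `e` is a cut edge of `H`: removing it disconnects two vertices connected in `H`. -/
def IsCutEdge (H : SimpleGraph V) (e : Sym2 V) : Prop :=
  e ∈ H.edgeSet ∧ ∃ a b, H.Reachable a b ∧ ¬(H.deleteEdges {e}).Reachable a b

/-- `H` is biconnected: it has an edge, it is connected (on its support),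
and it has no cut vertex. -/
def IsBiconnected (H : SimpleGraph V) : Prop :=
  H.edgeSet.Nonempty ∧ (∀ a ∈ H.support, ∀ b ∈ H.support, H.Reachable a b) ∧
    ∀ v, ¬IsCutVertex H v

/-- `B` is a block of `H`: a maximal biconnected subgraph. -/
def IsBlock (H B : SimpleGraph V) : Prop :=
  B ≤ H ∧ IsBiconnected B ∧ ∀ B', B ≤ B' → B' ≤ H → IsBiconnected B' → B' = B

/-- A graph is a cycle (graph): its edge set is the edge set of a cycle of length `≥ 3`. -/
def IsCycleGraph (B : SimpleGraph V) : Prop :=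
  ∃ (n : ℕ) (f : ℕ → V), 3 ≤ n ∧
    (∀ i j, i < n → j < n → f i = f j → i = j) ∧
    B.edgeSet = {e | ∃ i, ∃ _ : i < n, e = s(f i, f ((i + 1) % n))}

/-- `v` is a sink of the block `B` of the walk `w`: a common vertex of two odd
(or two even) edges of the walk belonging to `B`. -/
def IsSinkOf {G : SimpleGraph V} (w : EvenClosedWalk G) (B : SimpleGraph V) (v : V) : Prop :=
  ∃ e₁ e₂ : Sym2 V, e₁ ≠ e₂ ∧ e₁ ∈ B.edgeSet ∧ e₂ ∈ B.edgeSet ∧ v ∈ e₁ ∧ v ∈ e₂ ∧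
    ((e₁ ∈ w.plusEdges ∧ e₂ ∈ w.plusEdges) ∨ (e₁ ∈ w.minusEdges ∧ e₂ ∈ w.minusEdges))

/-- `B` is a pure cyclic block of the walk `w`: a block of `𝐰` which is a cycle all of whose
edges lie in `w⁺`, or all in `w⁻`. -/
def IsPureCyclicBlock {G : SimpleGraph V} (w : EvenClosedWalk G) (B : SimpleGraph V) : Prop :=
  IsBlock w.graph B ∧ IsCycleGraph B ∧
    (B.edgeSet ⊆ w.plusEdges ∨ B.edgeSet ⊆ w.minusEdges)

/-- A primitive walk is mixed if it has no pure cyclic block. -/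
def EvenClosedWalk.IsMixed {G : SimpleGraph V} (w : EvenClosedWalk G) : Prop :=
  ∀ B : SimpleGraph V, ¬IsPureCyclicBlock w B

/-!
An element of the universal Gröbner basis of `I_G` is a binomial `x^u - x^v` whose exponents
form a primitive pair: no sub-pair `a ≤ u`, `b ≤ v` other than `(0, 0)` and `(u, v)` has equal
vertex-degree vectors, since such a pair would give a binomial of `I_G` contradicting the
reducedness of the Gröbner basis.

Walking greedily along edges of `u` and `v` alternately, the equality of their degree vectors
produces a closed alternating walk, which by primitivity uses up all of `u` and `v`; its length
is `L = 2 deg (x^u - x^v)`. Along this tour a vertex cannot recur at even distance, and two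
recurrences cannot interleave: either would split off a smaller balanced pair. Neither can it
recur at distance `1` (no loops) or `2` (the two edges would coincide, but `u` and `v` have
disjoint supports). Every vertex thus occurs at most twice per period and the recurrences form
a non-crossing system, which leaves at least four vertices occurring once; so the tour visits at
least `L / 2 + 2` vertices, and `deg (x^u - x^v) ≤ m - 2`.
-/

namespace TermOrder

variable (t : TermOrder σ)

lemma lo_le_of_le {a b : σ →₀ ℕ} (h : a ≤ b) : t.lo.le a b := by
  obtain ⟨c, rfl⟩ := le_iff_exists_add.mp h
  simpa [add_comm] using t.add_right 0 c a (t.zero_min c)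

lemma leadExp_mem_support {f : MvPolynomial σ K} (hf : f ≠ 0) : t.leadExp f ∈ f.support := by
  rw [leadExp, dif_neg hf]
  exact @Finset.max'_mem _ t.lo _ _

lemma lo_le_leadExp {f : MvPolynomial σ K} {w : σ →₀ ℕ} (hw : w ∈ f.support) :
    t.lo.le w (t.leadExp f) := by
  have hf : f ≠ 0 := by rintro rfl; simp at hw
  rw [leadExp, dif_neg hf]
  exact @Finset.le_max' _ t.lo _ _ hw

lemma eq_leadExp_of_leadExp_le {f : MvPolynomial σ K} {w : σ →₀ ℕ} (hw : w ∈ f.support)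
    (h : t.leadExp f ≤ w) : w = t.leadExp f :=
  t.lo.le_antisymm _ _ (t.lo_le_leadExp hw) (t.lo_le_of_le h)

end TermOrder

lemma mem_support_binom {u v w : σ →₀ ℕ} (huv : u ≠ v) :
    w ∈ (binom K u v).support ↔ w = u ∨ w = v := by
  classical
  rw [mem_support_iff, binom, coeff_sub, coeff_monomial, coeff_monomial]
  rcases eq_or_ne w u with rfl | hu
  · simp [Ne.symm huv]
  rcases eq_or_ne w v with rfl | hv
  · simp [huv]
  simp [hu, hv, Ne.symm hu, Ne.symm hv]

lemma binom_ne_zero {u v : σ →₀ ℕ} (huv : u ≠ v) : binom K u v ≠ 0 := by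
  intro h
  have := (mem_support_binom (K := K) (w := u) huv).mpr (Or.inl rfl)
  simp [h] at this

lemma TermOrder.leadExp_binom (t : TermOrder σ) {u v : σ →₀ ℕ} (huv : u ≠ v) :
    t.leadExp (binom K u v) = u ∨ t.leadExp (binom K u v) = v :=
  (mem_support_binom huv).mp (t.leadExp_mem_support (binom_ne_zero huv))

lemma totalDegree_binom_le (u v : σ →₀ ℕ) :
    (binom K u v).totalDegree ≤ max u.degree v.degree :=
  (totalDegree_sub _ _).trans <|
    max_le_max (totalDegree_monomial_le u 1) (totalDegree_monomial_le v 1)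

namespace IsReducedGroebnerBasis

variable {t : TermOrder σ} {I : Ideal (MvPolynomial σ K)} {𝒢 : Finset (MvPolynomial σ K)}
  {f h : MvPolynomial σ K} {w : σ →₀ ℕ}

lemma exists_leadExp_le (hG : IsReducedGroebnerBasis t I 𝒢) (hh : h ∈ I) (h0 : h ≠ 0) :
    ∃ g ∈ 𝒢, t.leadExp g ≤ t.leadExp h := by
  classical
  obtain ⟨⟨-, hspan⟩, hmonic, -⟩ := hG
  have hinit : t.initial '' (𝒢 : Set (MvPolynomial σ K)) =
      (fun s => monomial s (1 : K)) '' (t.leadExp '' (𝒢 : Set (MvPolynomial σ K))) := by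
    rw [Set.image_image]
    exact Set.image_congr fun g hg => by rw [TermOrder.initial, hmonic g hg]
  have hmem : t.initial h ∈ Ideal.span ((fun s => monomial s (1 : K)) ''
      (t.leadExp '' (𝒢 : Set (MvPolynomial σ K)))) := by
    rw [← hinit, hspan]
    exact Ideal.subset_span ⟨h, hh, rfl⟩
  have hlead : t.leadExp h ∈ (t.initial h).support := by
    rw [TermOrder.initial, mem_support_iff, coeff_monomial, if_pos rfl]
    exact mem_support_iff.mp (t.leadExp_mem_support h0)
  obtain ⟨_, ⟨g, hg, rfl⟩, hle⟩ := mem_ideal_span_monomial_image.mp hmem _ hlead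
  exact ⟨g, hg, hle⟩

lemma not_leadExp_le (hG : IsReducedGroebnerBasis t I 𝒢) (hf : f ∈ 𝒢) (hw : w ∈ f.support)
    (hwf : w ≠ t.leadExp f) (hh : h ∈ I) (h0 : h ≠ 0) : ¬ t.leadExp h ≤ w := by
  intro hle
  obtain ⟨g, hg, hgh⟩ := hG.exists_leadExp_le hh h0
  by_cases hgf : g = f
  · subst hgf
    exact hwf (t.eq_leadExp_of_leadExp_le hw (hgh.trans hle))
  · exact hG.2.2 f hf g hg hgf w hw (hgh.trans hle)

lemma leadExp_eq_of_le (hG : IsReducedGroebnerBasis t I 𝒢) (hf : f ∈ 𝒢) (hh : h ∈ I)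
    (h0 : h ≠ 0) (hle : t.leadExp h ≤ t.leadExp f) : t.leadExp h = t.leadExp f := by
  obtain ⟨g, hg, hgh⟩ := hG.exists_leadExp_le hh h0
  by_cases hgf : g = f
  · subst hgf
    exact le_antisymm hle hgh
  · have hf0 : f ≠ 0 := by
      rintro rfl
      simpa using hG.2.1 _ hf
    exact absurd (hgh.trans hle) (hG.2.2 f hf g hg hgf _ (t.leadExp_mem_support hf0))

end IsReducedGroebnerBasis

/-- `x^u - x^v` is a primitive binomial of the toric ideal of `φ`, in the strong sense that
also rules out a common factor `x^a` (the case `a = b ≠ 0`). -/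
def IsPrimitivePair {M : Type*} [AddCommMonoid M] (φ : (σ →₀ ℕ) →+ M) (u v : σ →₀ ℕ) :
    Prop :=
  u ≠ v ∧ φ u = φ v ∧ ∀ a ≤ u, ∀ b ≤ v, φ a = φ b → a = 0 ∧ b = 0 ∨ a = u ∧ b = v

lemma IsPrimitivePair.mapDomain {τ M : Type*} [AddCommMonoid M] {φ : (τ →₀ ℕ) →+ M}
    {f : σ → τ} (hf : Function.Injective f) {u v : σ →₀ ℕ}
    (h : IsPrimitivePair (φ.comp (Finsupp.mapDomain.addMonoidHom f)) u v) :
    IsPrimitivePair φ (u.mapDomain f) (v.mapDomain f) := by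
  classical
  obtain ⟨huv, hφ, hprim⟩ := h
  have lift : ∀ {a : τ →₀ ℕ} {w : σ →₀ ℕ}, a ≤ w.mapDomain f →
      (a.comapDomain f hf.injOn).mapDomain f = a ∧ a.comapDomain f hf.injOn ≤ w := by
    intro a w ha
    refine ⟨Finsupp.mapDomain_comapDomain f hf a fun x hx => ?_, fun x => ?_⟩
    · have hx' := Finsupp.support_mono ha hx
      obtain ⟨y, -, rfl⟩ := Finset.mem_image.mp (Finsupp.mapDomain_support hx')
      exact ⟨y, rfl⟩
    · simpa [Finsupp.mapDomain_apply hf] using ha (f x)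
  refine ⟨(Finsupp.mapDomain_injective hf).ne huv, hφ, fun a ha b hb hab => ?_⟩
  obtain ⟨ha', hau⟩ := lift ha
  obtain ⟨hb', hbv⟩ := lift hb
  have hab' : (φ.comp (Finsupp.mapDomain.addMonoidHom f)) (a.comapDomain f hf.injOn) =
      (φ.comp (Finsupp.mapDomain.addMonoidHom f)) (b.comapDomain f hf.injOn) := by
    simpa [ha', hb'] using hab
  rcases hprim _ hau _ hbv hab' with ⟨ha0, hb0⟩ | ⟨ha1, hb1⟩
  · left
    rw [← ha', ← hb', ha0, hb0]
    exact ⟨Finsupp.mapDomain_zero, Finsupp.mapDomain_zero⟩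
  · right
    rw [← ha', ← hb', ha1, hb1]
    exact ⟨rfl, rfl⟩

namespace IsPrimitivePair

variable {M : Type*} [AddCommMonoid M] {φ : (σ →₀ ℕ) →+ M} {u v : σ →₀ ℕ}

lemma apply_eq_zero_or (h : IsPrimitivePair φ u v) (e : σ) : u e = 0 ∨ v e = 0 := by
  by_contra! he
  rcases h.2.2 _ (Finsupp.single_le_iff.mpr (Nat.one_le_iff_ne_zero.mpr he.1)) _
    (Finsupp.single_le_iff.mpr (Nat.one_le_iff_ne_zero.mpr he.2)) rfl with ⟨h0, -⟩ | ⟨hu, hv⟩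
  · exact one_ne_zero (Finsupp.single_eq_zero.mp h0)
  · exact h.1 (hu.symm.trans hv)

lemma degree_add_eq_zero_or_eq (h : IsPrimitivePair φ u v) {a b : σ →₀ ℕ} (ha : a ≤ u)
    (hb : b ≤ v) (hab : φ a = φ b) :
    a.degree + b.degree = 0 ∨ a.degree + b.degree = u.degree + v.degree := by
  rcases h.2.2 a ha b hb hab with ⟨rfl, rfl⟩ | ⟨rfl, rfl⟩
  · simp
  · simp

end IsPrimitivePair

def IsMonomialMap {τ : Type*} (ψ : MvPolynomial σ K →ₐ[K] MvPolynomial τ K)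
    (φ : (σ →₀ ℕ) →+ (τ →₀ ℕ)) : Prop :=
  ∀ w, ψ (monomial w 1) = monomial (φ w) 1

section MonomialMap

variable {τ : Type*} {ψ : MvPolynomial σ K →ₐ[K] MvPolynomial τ K}
  {φ : (σ →₀ ℕ) →+ (τ →₀ ℕ)}

lemma IsMonomialMap.map_monomial (hψ : IsMonomialMap ψ φ)
    (w : σ →₀ ℕ) (c : K) : ψ (monomial w c) = monomial (φ w) c := by
  rw [← mul_one c, ← smul_eq_mul, ← smul_monomial, map_smul, hψ w, smul_monomial]

lemma binom_mem_ker (hψ : IsMonomialMap ψ φ) {a b : σ →₀ ℕ}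
    (h : φ a = φ b) : binom K a b ∈ RingHom.ker ψ := by
  rw [RingHom.mem_ker, binom, map_sub, hψ a, hψ b, h, sub_self]

lemma sum_coeff_fiber_eq_zero [DecidableEq τ] (hψ : IsMonomialMap ψ φ) {f : MvPolynomial σ K}
    (hf : f ∈ RingHom.ker ψ) (D : τ →₀ ℕ) :
    ∑ w ∈ f.support with φ w = D, f.coeff w = 0 := by
  classical
  have h := congrArg (coeff D) (RingHom.mem_ker.mp hf)
  conv_lhs at h => rw [f.as_sum]
  simp only [map_sum, hψ.map_monomial, coeff_sum, coeff_monomial,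
    coeff_zero] at h
  rwa [Finset.sum_filter]

namespace IsReducedGroebnerBasis

variable {t : TermOrder σ} {𝒢 : Finset (MvPolynomial σ K)} {f : MvPolynomial σ K}

/-- If `a ≠ b`, the leading monomial of `x^a - x^b ∈ I` would divide a non-leading monomial
of `f`. -/
lemma eq_of_le_of_le (hψ : IsMonomialMap ψ φ)
    (hG : IsReducedGroebnerBasis t (RingHom.ker ψ) 𝒢) (hf : f ∈ 𝒢) {w w' a b : σ →₀ ℕ}
    (hw : w ∈ f.support) (hw' : w' ∈ f.support) (hwf : w ≠ t.leadExp f)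
    (hw'f : w' ≠ t.leadExp f) (hab : φ a = φ b) (ha : a ≤ w) (hb : b ≤ w') : a = b := by
  by_contra hne
  have hmem := binom_mem_ker hψ hab
  rcases t.leadExp_binom (K := K) hne with hl | hl
  · exact hG.not_leadExp_le hf hw hwf hmem (binom_ne_zero hne) (by rwa [hl])
  · exact hG.not_leadExp_le hf hw' hw'f hmem (binom_ne_zero hne) (by rwa [hl])

lemma eq_leadExp_of_le (hψ : IsMonomialMap ψ φ)
    (hG : IsReducedGroebnerBasis t (RingHom.ker ψ) 𝒢) (hf : f ∈ 𝒢) {w a b : σ →₀ ℕ}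
    (hw : w ∈ f.support) (hwf : w ≠ t.leadExp f) (hab : φ a = φ b) (hne : a ≠ b)
    (ha : a ≤ t.leadExp f) (hb : b ≤ w) : a = t.leadExp f := by
  have hmem := binom_mem_ker hψ hab
  rcases t.leadExp_binom (K := K) hne with hl | hl
  · rw [← hl]
    exact hG.leadExp_eq_of_le hf hmem (binom_ne_zero hne) (by rwa [hl])
  · exact absurd (by rwa [hl]) (hG.not_leadExp_le hf hw hwf hmem (binom_ne_zero hne))

/-- Otherwise the fiber of `φ w` in the support of `f` is `{w}` by `eq_of_le_of_le`, while the
coefficients of `f` over a fiber sum to zero. -/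
lemma map_eq_map_leadExp (hψ : IsMonomialMap ψ φ)
    (hG : IsReducedGroebnerBasis t (RingHom.ker ψ) 𝒢) (hf : f ∈ 𝒢) {w : σ →₀ ℕ}
    (hw : w ∈ f.support) : φ w = φ (t.leadExp f) := by
  classical
  by_contra hne
  have hwu : w ≠ t.leadExp f := by rintro rfl; exact hne rfl
  have hsingle : {w' ∈ f.support | φ w' = φ w} = {w} := by
    refine Finset.eq_singleton_iff_unique_mem.mpr ⟨Finset.mem_filter.mpr ⟨hw, rfl⟩, ?_⟩
    intro w' hw'
    obtain ⟨hw'f, hφ⟩ := Finset.mem_filter.mp hw'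
    have hw'u : w' ≠ t.leadExp f := by rintro rfl; exact hne hφ.symm
    exact hG.eq_of_le_of_le hψ hf hw'f hw hw'u hwu hφ le_rfl le_rfl
  have := sum_coeff_fiber_eq_zero hψ (hG.1.1 hf) (φ w)
  rw [hsingle, Finset.sum_singleton] at this
  exact mem_support_iff.mp hw this

lemma exists_eq_binom (hψ : IsMonomialMap ψ φ)
    (hG : IsReducedGroebnerBasis t (RingHom.ker ψ) 𝒢) (hf : f ∈ 𝒢) :
    ∃ v, v ≠ t.leadExp f ∧ φ v = φ (t.leadExp f) ∧ f = binom K (t.leadExp f) v := by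
  classical
  set u := t.leadExp f
  have hu1 : f.coeff u = 1 := hG.2.1 f hf
  have huf : u ∈ f.support := mem_support_iff.mpr (by simp [hu1])
  have hfiber := sum_coeff_fiber_eq_zero hψ (hG.1.1 hf) (φ u)
  rw [Finset.filter_true_of_mem fun w hw => hG.map_eq_map_leadExp hψ hf hw] at hfiber
  obtain ⟨v, hv, hvu⟩ : ∃ v ∈ f.support, v ≠ u := by
    by_contra! h
    rw [Finset.sum_eq_single_of_mem u huf fun w hw hwu => absurd (h w hw) hwu, hu1] at hfiber
    exact one_ne_zero hfiber
  have hsupp : f.support = {u, v} := by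
    ext w
    simp only [Finset.mem_insert, Finset.mem_singleton]
    refine ⟨fun hw => or_iff_not_imp_left.mpr fun hwu => ?_, by rintro (rfl | rfl) <;> assumption⟩
    exact hG.eq_of_le_of_le hψ hf hw hv hwu hvu
      ((hG.map_eq_map_leadExp hψ hf hw).trans (hG.map_eq_map_leadExp hψ hf hv).symm)
      le_rfl le_rfl
  rw [hsupp, Finset.sum_pair hvu.symm, hu1] at hfiber
  refine ⟨v, hvu, hG.map_eq_map_leadExp hψ hf hv, ?_⟩
  rw [f.as_sum, hsupp, Finset.sum_pair hvu.symm, hu1, eq_neg_of_add_eq_zero_right hfiber,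
    binom, map_neg, sub_eq_add_neg]

end IsReducedGroebnerBasis

theorem exists_isPrimitivePair_of_mem_universalGB
    (hψ : IsMonomialMap ψ φ) {f : MvPolynomial σ K}
    (hf : f ∈ UniversalGB (RingHom.ker ψ)) : ∃ u v, IsPrimitivePair φ u v ∧ f = binom K u v := by
  obtain ⟨t, 𝒢, hG, hf𝒢⟩ := hf
  obtain ⟨v, hvu, hφ, hfeq⟩ := hG.exists_eq_binom hψ hf𝒢
  set u := t.leadExp f
  have hv : v ∈ f.support := by
    rw [hfeq]
    exact (mem_support_binom hvu.symm).mpr (Or.inr rfl)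
  refine ⟨u, v, ⟨hvu.symm, hφ.symm, fun a ha b hb hab => ?_⟩, hfeq⟩
  by_cases hab' : a = b
  · subst hab'
    by_contra hcon
    have ha0 : a ≠ 0 := fun h => hcon (Or.inl ⟨h, h⟩)
    have hsub : φ (u - a) = φ (v - a) := add_right_cancel (b := φ a) <| by
      rw [← map_add, ← map_add, tsub_add_cancel_of_le ha, tsub_add_cancel_of_le hb, hφ]
    have hne : u - a ≠ v - a := fun h => hvu <| by
      rw [← tsub_add_cancel_of_le ha, ← tsub_add_cancel_of_le hb, h]
    have hua := hG.eq_leadExp_of_le hψ hf𝒢 hv hvu hsub hne tsub_le_self tsub_le_self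
    have hcancel := tsub_add_cancel_of_le ha
    rw [hua] at hcancel
    exact ha0 (add_eq_left.mp hcancel)
  · have hau := hG.eq_leadExp_of_le hψ hf𝒢 hv hvu hab hab' ha hb
    refine Or.inr ⟨hau, hG.eq_of_le_of_le hψ hf𝒢 hv hv hvu hvu ?_ hb le_rfl⟩
    rw [← hab, hau, hφ]

end MonomialMap

section Incidence

def endVec (e : Sym2 V) : V →₀ ℕ :=
  Sym2.lift ⟨fun a b => Finsupp.single a 1 + Finsupp.single b 1, fun _ _ => add_comm _ _⟩ e

lemma endVec_mk (a b : V) : endVec s(a, b) = Finsupp.single a 1 + Finsupp.single b 1 := rfl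

lemma degree_endVec (e : Sym2 V) : (endVec e).degree = 2 := by
  induction e using Sym2.ind with
  | _ a b => simp [endVec_mk]

lemma endVec_apply_ne_zero_iff {e : Sym2 V} {y : V} : endVec e y ≠ 0 ↔ y ∈ e := by
  classical
  induction e using Sym2.ind with
  | _ a b =>
    rcases eq_or_ne a y with rfl | ha
    · simp [endVec_mk]
    rcases eq_or_ne b y with rfl | hb
    · simp [endVec_mk]
    simp [endVec_mk, ha.symm, hb.symm]

def degVec : (Sym2 V →₀ ℕ) →+ (V →₀ ℕ) :=
  (Finsupp.linearCombination ℕ endVec).toAddMonoidHom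

lemma degVec_single (e : Sym2 V) (n : ℕ) : degVec (Finsupp.single e n) = n • endVec e := by
  simp [degVec]

lemma degree_degVec (w : Sym2 V →₀ ℕ) : (degVec w).degree = 2 * w.degree := by
  induction w using Finsupp.induction with
  | zero => simp
  | single_add e n w _ _ ih =>
    rw [map_add, map_add, map_add, ih, degVec_single, map_nsmul, degree_endVec,
      Finsupp.degree_single, smul_eq_mul]
    ring

lemma degree_eq_of_degVec_eq {a b : Sym2 V →₀ ℕ} (h : degVec a = degVec b) :
    a.degree = b.degree := by
  have := degree_degVec a
  rw [h, degree_degVec] at this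
  omega

lemma degVec_mono {a b : Sym2 V →₀ ℕ} (h : a ≤ b) : degVec a ≤ degVec b := by
  obtain ⟨c, rfl⟩ := exists_add_of_le h
  rw [map_add]
  exact le_self_add

lemma exists_mem_lt_of_degVec_lt {c d : Sym2 V →₀ ℕ} (hcd : c ≤ d) {y : V}
    (h : degVec c y < degVec d y) : ∃ e, y ∈ e ∧ c e < d e := by
  obtain ⟨r, rfl⟩ := exists_add_of_le hcd
  have hr : degVec r y ≠ 0 := by
    rw [map_add, Finsupp.add_apply] at h
    omega
  simp only [degVec, LinearMap.toAddMonoidHom_coe, Finsupp.linearCombination_apply,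
    Finsupp.sum, Finsupp.finsetSum_apply] at hr
  obtain ⟨e, -, he⟩ := Finset.exists_ne_zero_of_sum_ne_zero hr
  rw [Finsupp.smul_apply, smul_eq_mul] at he
  refine ⟨e, endVec_apply_ne_zero_iff.mp (right_ne_zero_of_mul he), ?_⟩
  rw [Finsupp.add_apply]
  have := left_ne_zero_of_mul he
  omega

lemma IsPrimitivePair.ne_zero {u v : Sym2 V →₀ ℕ} (h : IsPrimitivePair degVec u v) : u ≠ 0 := by
  rintro rfl
  have hv := degree_eq_of_degVec_eq h.2.1
  rw [map_zero, eq_comm, Finsupp.degree_eq_zero_iff] at hv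
  exact h.1 hv.symm

end Incidence

lemma edgeImage_eq_monomial (e : Sym2 V) : edgeImage K e = monomial (endVec e) 1 := by
  induction e using Sym2.ind with
  | _ a b =>
    rw [edgeImage, Sym2.lift_mk]
    exact (monomial_mul ..).trans (by rw [one_mul, endVec_mk])

lemma isMonomialMap_aeval_edgeImage (G : SimpleGraph V) :
    IsMonomialMap (aeval fun e : G.edgeSet => edgeImage K (e : Sym2 V))
      (degVec.comp (Finsupp.mapDomain.addMonoidHom Subtype.val)) := by
  intro w
  rw [aeval_monomial, map_one, one_mul, AddMonoidHom.comp_apply,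
    Finsupp.mapDomain.addMonoidHom_apply, degVec, LinearMap.toAddMonoidHom_coe,
    Finsupp.linearCombination_mapDomain, Finsupp.linearCombination_apply,
    monomial_finsupp_sum_index, C_1, one_mul]
  simp only [edgeImage_eq_monomial, monomial_pow, one_pow, Function.comp_apply]

lemma Function.Periodic.sum_Ico_add_eq {M : Type*} [AddCommMonoid M] {f : ℕ → M} {L : ℕ}
    (hf : Function.Periodic f L) (k : ℕ) :
    ∑ t ∈ Finset.Ico k (k + L), f t = ∑ t ∈ Finset.range L, f t := by
  calc ∑ t ∈ Finset.Ico k (k + L), f t = ∑ t ∈ Finset.Ico k (k + L), f (t % L) :=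
        Finset.sum_congr rfl fun t _ => (hf.map_mod_nat t).symm
    _ = (((Multiset.Ico k (k + L)).map (· % L)).map f).sum := by
        rw [Multiset.map_map]
        rfl
    _ = ∑ t ∈ Finset.range L, f t := by
        rw [Nat.multiset_Ico_map_mod]
        rfl

lemma Finsupp.add_single_one_le {α : Type*} {c d : α →₀ ℕ} (hcd : c ≤ d) {a : α}
    (h : c a < d a) : c + Finsupp.single a 1 ≤ d := by
  classical
  intro b
  rw [Finsupp.add_apply, Finsupp.single_apply]
  split_ifs with hab
  · subst hab
    omega
  · simpa using hcd b

section AlternatingWalk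

variable (x : ℕ → V)

/-- The parity is that of the absolute position `t`, not of `t - i`. -/
def evenEdges (i j : ℕ) : Sym2 V →₀ ℕ :=
  ∑ t ∈ Finset.Ico i j, if Even t then Finsupp.single s(x t, x (t + 1)) 1 else 0

def oddEdges (i j : ℕ) : Sym2 V →₀ ℕ :=
  ∑ t ∈ Finset.Ico i j, if Even t then 0 else Finsupp.single s(x t, x (t + 1)) 1

variable {x} {i j k : ℕ}

lemma evenEdges_add_evenEdges (hij : i ≤ j) (hjk : j ≤ k) :
    evenEdges x i j + evenEdges x j k = evenEdges x i k :=
  Finset.sum_Ico_consecutive _ hij hjk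

lemma oddEdges_add_oddEdges (hij : i ≤ j) (hjk : j ≤ k) :
    oddEdges x i j + oddEdges x j k = oddEdges x i k :=
  Finset.sum_Ico_consecutive _ hij hjk

lemma evenEdges_mono {i' j' : ℕ} (hi : i' ≤ i) (hij : i ≤ j) (hj : j ≤ j') :
    evenEdges x i j ≤ evenEdges x i' j' := by
  rw [← evenEdges_add_evenEdges hi (hij.trans hj), ← evenEdges_add_evenEdges hij hj]
  exact le_add_left le_self_add

lemma oddEdges_mono {i' j' : ℕ} (hi : i' ≤ i) (hij : i ≤ j) (hj : j ≤ j') :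
    oddEdges x i j ≤ oddEdges x i' j' := by
  rw [← oddEdges_add_oddEdges hi (hij.trans hj), ← oddEdges_add_oddEdges hij hj]
  exact le_add_left le_self_add

variable (x) in
lemma evenEdges_succ_self (t : ℕ) :
    evenEdges x t (t + 1) = if Even t then Finsupp.single s(x t, x (t + 1)) 1 else 0 := by
  simp [evenEdges]

variable (x) in
lemma oddEdges_succ_self (t : ℕ) :
    oddEdges x t (t + 1) = if Even t then 0 else Finsupp.single s(x t, x (t + 1)) 1 := by
  simp [oddEdges]

lemma evenEdges_congr {x' : ℕ → V} (h : ∀ t, i ≤ t → t ≤ j → x t = x' t) :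
    evenEdges x i j = evenEdges x' i j :=
  Finset.sum_congr rfl fun t ht => by
    rw [Finset.mem_Ico] at ht
    rw [h t ht.1 ht.2.le, h (t + 1) (by omega) ht.2]

lemma oddEdges_congr {x' : ℕ → V} (h : ∀ t, i ≤ t → t ≤ j → x t = x' t) :
    oddEdges x i j = oddEdges x' i j :=
  Finset.sum_congr rfl fun t ht => by
    rw [Finset.mem_Ico] at ht
    rw [h t ht.1 ht.2.le, h (t + 1) (by omega) ht.2]

variable (x) in
lemma degree_evenEdges_add_degree_oddEdges (i j : ℕ) :
    (evenEdges x i j).degree + (oddEdges x i j).degree = j - i := by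
  have hone : ∀ t : ℕ, ((if Even t then 1 else 0) + if Even t then 0 else 1 : ℕ) = 1 :=
    fun t => by split_ifs <;> rfl
  rw [← map_add, evenEdges, oddEdges, ← Finset.sum_add_distrib, map_sum]
  simp [apply_ite Finsupp.degree, hone]

variable (x) in
lemma degVec_evenEdges_sub_degVec_oddEdges [DecidableEq V] (hij : i ≤ j) (y : V) :
    (degVec (evenEdges x i j) y : ℤ) - degVec (oddEdges x i j) y =
      (-1) ^ i * (if x i = y then 1 else 0) - (-1) ^ j * (if x j = y then 1 else 0) := by
  induction j, hij using Nat.le_induction with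
  | base => simp [evenEdges, oddEdges]
  | succ j hij ih =>
    rw [← evenEdges_add_evenEdges hij j.le_succ, ← oddEdges_add_oddEdges hij j.le_succ,
      evenEdges_succ_self, oddEdges_succ_self]
    rcases Nat.even_or_odd j with hj | hj
    · simp only [hj, if_true, map_add, degVec_single, endVec_mk, Finsupp.add_apply,
        map_zero, Finsupp.coe_zero, Pi.zero_apply, one_smul, Finsupp.single_apply] at ih ⊢
      rw [pow_succ, hj.neg_one_pow] at *
      push_cast
      linarith
    · simp only [Nat.not_even_iff_odd.mpr hj, if_false, map_add, degVec_single, endVec_mk,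
        Finsupp.add_apply, map_zero, Finsupp.coe_zero, Pi.zero_apply, one_smul,
        Finsupp.single_apply] at ih ⊢
      rw [pow_succ, hj.neg_one_pow] at *
      push_cast
      linarith

variable (x) in
lemma degVec_evenEdges_eq_degVec_oddEdges (hij : i ≤ j) (hx : x i = x j)
    (heven : Even (j - i)) : degVec (evenEdges x i j) = degVec (oddEdges x i j) := by
  classical
  ext y
  have h := degVec_evenEdges_sub_degVec_oddEdges x hij y
  rw [← Nat.sub_add_cancel hij, pow_add, heven.neg_one_pow, one_mul, Nat.sub_add_cancel hij,
    hx, sub_self] at h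
  omega

lemma evenEdges_add_period {L : ℕ} (hx : Function.Periodic x L) (hL : Even L) (k : ℕ) :
    evenEdges x k (k + L) = evenEdges x 0 L := by
  rw [evenEdges, evenEdges, ← Finset.range_eq_Ico]
  refine Function.Periodic.sum_Ico_add_eq (fun t => ?_) k
  simp only [Nat.even_add, hL, iff_true, hx t, add_right_comm t L 1, hx (t + 1)]

lemma oddEdges_add_period {L : ℕ} (hx : Function.Periodic x L) (hL : Even L) (k : ℕ) :
    oddEdges x k (k + L) = oddEdges x 0 L := by
  rw [oddEdges, oddEdges, ← Finset.range_eq_Ico]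
  refine Function.Periodic.sum_Ico_add_eq (fun t => ?_) k
  simp only [Nat.even_add, hL, iff_true, hx t, add_right_comm t L 1, hx (t + 1)]

variable (x) in
lemma evenEdges_update (n : ℕ) (y : V) :
    evenEdges (Function.update x (n + 1) y) 0 (n + 1) =
      evenEdges x 0 n + if Even n then Finsupp.single s(x n, y) 1 else 0 := by
  rw [← evenEdges_add_evenEdges n.zero_le n.le_succ, evenEdges_succ_self,
    evenEdges_congr (x' := x) fun t _ ht => Function.update_of_ne (by omega) _ _,
    Function.update_self, Function.update_of_ne (by omega)]

variable (x) in
lemma oddEdges_update (n : ℕ) (y : V) :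
    oddEdges (Function.update x (n + 1) y) 0 (n + 1) =
      oddEdges x 0 n + if Even n then 0 else Finsupp.single s(x n, y) 1 := by
  rw [← oddEdges_add_oddEdges n.zero_le n.le_succ, oddEdges_succ_self,
    oddEdges_congr (x' := x) fun t _ ht => Function.update_of_ne (by omega) _ _,
    Function.update_self, Function.update_of_ne (by omega)]

end AlternatingWalk

section EulerTour

variable {u v : Sym2 V →₀ ℕ} {x : ℕ → V} {n : ℕ}

/-- The balance `degVec u = degVec v` leaves an unused edge at the end of an alternating walk
that has not closed up at even length. -/
lemma exists_extend_of_degVec_eq (hbal : degVec u = degVec v) (hx0 : degVec u (x 0) ≠ 0)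
    (hopen : ¬(0 < n ∧ Even n ∧ x n = x 0)) (he : evenEdges x 0 n ≤ u)
    (ho : oddEdges x 0 n ≤ v) :
    ∃ x' : ℕ → V, x' 0 = x 0 ∧ evenEdges x' 0 (n + 1) ≤ u ∧ oddEdges x' 0 (n + 1) ≤ v := by
  classical
  have htel := degVec_evenEdges_sub_degVec_oddEdges x n.zero_le (x n)
  have hE := degVec_mono he (x n)
  have hO := degVec_mono ho (x n)
  rw [← hbal] at hO
  rw [pow_zero, one_mul, if_pos rfl] at htel
  rcases Nat.even_or_odd n with hn | hn
  · have hlt : degVec (evenEdges x 0 n) (x n) < degVec u (x n) := by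
      rcases Nat.eq_zero_or_pos n with rfl | hpos
      · simpa [evenEdges] using Nat.pos_of_ne_zero hx0
      · have hne : x 0 ≠ x n := fun h => hopen ⟨hpos, hn, h.symm⟩
        rw [if_neg hne, hn.neg_one_pow] at htel
        omega
    obtain ⟨e, hxe, hlt⟩ := exists_mem_lt_of_degVec_lt he hlt
    refine ⟨Function.update x (n + 1) (Sym2.Mem.other hxe), Function.update_of_ne (by omega) _ _,
      ?_, ?_⟩
    · rw [evenEdges_update, if_pos hn, Sym2.other_spec]
      exact Finsupp.add_single_one_le he hlt
    · rw [oddEdges_update, if_pos hn, add_zero]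
      exact ho
  · have hlt : degVec (oddEdges x 0 n) (x n) < degVec v (x n) := by
      rw [← hbal]
      rw [hn.neg_one_pow] at htel
      split_ifs at htel <;> omega
    obtain ⟨e, hxe, hlt⟩ := exists_mem_lt_of_degVec_lt ho hlt
    refine ⟨Function.update x (n + 1) (Sym2.Mem.other hxe), Function.update_of_ne (by omega) _ _,
      ?_, ?_⟩
    · rw [evenEdges_update, if_neg (Nat.not_even_iff_odd.mpr hn), add_zero]
      exact he
    · rw [oddEdges_update, if_neg (Nat.not_even_iff_odd.mpr hn), Sym2.other_spec]
      exact Finsupp.add_single_one_le ho hlt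

lemma exists_closed_walk_le (hbal : degVec u = degVec v) (hu : u ≠ 0) :
    ∃ (x : ℕ → V) (L : ℕ), 0 < L ∧ Even L ∧ x L = x 0 ∧
      evenEdges x 0 L ≤ u ∧ oddEdges x 0 L ≤ v := by
  by_contra! hclosed
  obtain ⟨e, he⟩ := Finsupp.ne_iff.mp hu
  obtain ⟨y, hy⟩ : ∃ y, y ∈ e := ⟨_, Sym2.out_fst_mem e⟩
  have hy0 : degVec u y ≠ 0 := by
    have h1 := degVec_mono (Finsupp.single_le_iff.mpr (Nat.one_le_iff_ne_zero.mpr he)) y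
    rw [degVec_single, one_smul] at h1
    have := endVec_apply_ne_zero_iff.mpr hy
    omega
  -- with no closed alternating walk below `(u, v)`, walks could be extended forever
  have hwalk : ∀ n, ∃ x : ℕ → V, x 0 = y ∧ evenEdges x 0 n ≤ u ∧ oddEdges x 0 n ≤ v := by
    intro n
    induction n with
    | zero => exact ⟨fun _ => y, rfl, by simp [evenEdges], by simp [oddEdges]⟩
    | succ n ih =>
      obtain ⟨x, hx0, he, ho⟩ := ih
      obtain ⟨x', hx', he', ho'⟩ := exists_extend_of_degVec_eq hbal (hx0 ▸ hy0)
        (fun ⟨hpos, hn, hxn⟩ => hclosed x n hpos hn hxn he ho) he ho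
      exact ⟨x', hx'.trans hx0, he', ho'⟩
  obtain ⟨x, -, he, ho⟩ := hwalk (u.degree + v.degree + 1)
  have := degree_evenEdges_add_degree_oddEdges x 0 (u.degree + v.degree + 1)
  have := Finsupp.degree_mono he
  have := Finsupp.degree_mono ho
  omega

end EulerTour

/-- A closed walk of even length `L`, extended `L`-periodically to all of `ℕ`, whose edges in
even positions form `u` and in odd positions form `v`. -/
structure IsAlternatingTour (x : ℕ → V) (L : ℕ) (u v : Sym2 V →₀ ℕ) : Prop where
  pos : 0 < L
  even : Even L
  periodic : Function.Periodic x L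
  evenEdges_eq : evenEdges x 0 L = u
  oddEdges_eq : oddEdges x 0 L = v

lemma IsPrimitivePair.exists_isAlternatingTour {u v : Sym2 V →₀ ℕ}
    (h : IsPrimitivePair degVec u v) : ∃ x L, IsAlternatingTour x L u v := by
  obtain ⟨x, L, hL, hLe, hxL, he, ho⟩ := exists_closed_walk_le h.2.1 h.ne_zero
  have hagree : ∀ t, 0 ≤ t → t ≤ L → x t = x (t % L) := by
    intro t _ ht
    rcases ht.lt_or_eq with ht | rfl
    · rw [Nat.mod_eq_of_lt ht]
    · rw [Nat.mod_self, hxL]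
  have hbal := degVec_evenEdges_eq_degVec_oddEdges x L.zero_le hxL.symm (by simpa using hLe)
  rcases h.2.2 _ he _ ho hbal with ⟨he0, ho0⟩ | ⟨he1, ho1⟩
  · have := degree_evenEdges_add_degree_oddEdges x 0 L
    simp [he0, ho0] at this
    omega
  · exact ⟨fun t => x (t % L), L, hL, hLe, fun t => by simp,
      (evenEdges_congr hagree).symm.trans he1, (oddEdges_congr hagree).symm.trans ho1⟩

namespace IsAlternatingTour

variable {x : ℕ → V} {L : ℕ} {u v : Sym2 V →₀ ℕ}

lemma evenEdges_window (ht : IsAlternatingTour x L u v) (k : ℕ) : evenEdges x k (k + L) = u :=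
  (evenEdges_add_period ht.periodic ht.even k).trans ht.evenEdges_eq

lemma oddEdges_window (ht : IsAlternatingTour x L u v) (k : ℕ) : oddEdges x k (k + L) = v :=
  (oddEdges_add_period ht.periodic ht.even k).trans ht.oddEdges_eq

lemma degree_add_degree (ht : IsAlternatingTour x L u v) : u.degree + v.degree = L := by
  rw [← ht.evenEdges_eq, ← ht.oddEdges_eq, degree_evenEdges_add_degree_oddEdges, Nat.sub_zero]

lemma apply_edge_ne_zero_of_even (ht : IsAlternatingTour x L u v) {k : ℕ} (hk : Even k) :
    u s(x k, x (k + 1)) ≠ 0 := by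
  have h := evenEdges_mono (x := x) le_rfl k.le_succ (by have := ht.pos; omega : k + 1 ≤ k + L)
  rw [ht.evenEdges_window, evenEdges_succ_self, if_pos hk, Finsupp.single_le_iff] at h
  omega

lemma apply_edge_ne_zero_of_odd (ht : IsAlternatingTour x L u v) {k : ℕ} (hk : Odd k) :
    v s(x k, x (k + 1)) ≠ 0 := by
  have h := oddEdges_mono (x := x) le_rfl k.le_succ (by have := ht.pos; omega : k + 1 ≤ k + L)
  rw [ht.oddEdges_window, oddEdges_succ_self, if_neg (Nat.not_even_iff_odd.mpr hk),
    Finsupp.single_le_iff] at h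
  omega

/-- Cutting the tour at a vertex repeated at even distance would split off a shorter balanced
closed walk. -/
lemma odd_sub_of_eq (ht : IsAlternatingTour x L u v) (hp : IsPrimitivePair degVec u v)
    {k l : ℕ} (hkl : k < l) (hlk : l < k + L) (hx : x k = x l) : Odd (l - k) := by
  by_contra hodd
  have hbal := degVec_evenEdges_eq_degVec_oddEdges x hkl.le hx (Nat.not_odd_iff_even.mp hodd)
  have hsum := degree_evenEdges_add_degree_oddEdges x k l
  have := ht.degree_add_degree
  rcases hp.degree_add_eq_zero_or_eq
    (ht.evenEdges_window k ▸ evenEdges_mono le_rfl hkl.le hlk.le)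
    (ht.oddEdges_window k ▸ oddEdges_mono le_rfl hkl.le hlk.le) hbal with h | h <;> omega

/-- The arcs `[k, p]` and `[l, r]` both run from `x k` to `x p`, with opposite parities, so
together they would form a proper balanced sub-pair. -/
lemma not_crossing (ht : IsAlternatingTour x L u v) (hp : IsPrimitivePair degVec u v)
    {k p l r : ℕ} (hkp : k < p) (hpl : p < l) (hlr : l < r) (hrk : r < k + L)
    (hkl : x k = x l) (hpr : x p = x r) : False := by
  classical
  have hsign : ∀ {a b : ℕ}, a < b → b < a + L → x a = x b → (-1 : ℤ) ^ b = -(-1) ^ a := by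
    intro a b hab hba hx
    obtain ⟨c, hc⟩ := ht.odd_sub_of_eq hp hab hba hx
    rw [← Nat.sub_add_cancel hab.le, hc, pow_add, pow_succ, pow_mul]
    ring
  have hbal : degVec (evenEdges x k p + evenEdges x l r) =
      degVec (oddEdges x k p + oddEdges x l r) := by
    ext y
    have h1 := degVec_evenEdges_sub_degVec_oddEdges x hkp.le y
    have h2 := degVec_evenEdges_sub_degVec_oddEdges x hlr.le y
    rw [hsign (by omega) (by omega) hkl, hsign (by omega) (by omega) hpr, ← hkl, ← hpr] at h2
    simp only [map_add, Finsupp.add_apply]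
    zify
    linarith
  have hle : ∀ E : ℕ → ℕ → Sym2 V →₀ ℕ, (∀ {a b c}, a ≤ b → b ≤ c → E a b + E b c = E a c) →
      E k p + E l r ≤ E k (k + L) := by
    intro E hE
    rw [← hE hkp.le (by omega : p ≤ k + L), ← hE hpl.le (by omega : l ≤ k + L),
      ← hE hlr.le (by omega : r ≤ k + L)]
    exact add_le_add_right (le_add_left le_self_add) _
  have h1 := degree_evenEdges_add_degree_oddEdges x k p
  have h2 := degree_evenEdges_add_degree_oddEdges x l r
  have := ht.degree_add_degree
  rcases hp.degree_add_eq_zero_or_eq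
    (ht.evenEdges_window k ▸ hle _ evenEdges_add_evenEdges)
    (ht.oddEdges_window k ▸ hle _ oddEdges_add_oddEdges) hbal with h | h <;>
    simp only [map_add] at h <;> omega

lemma ne_succ (ht : IsAlternatingTour x L u v)
    (hloop : ∀ e : Sym2 V, e.IsDiag → u e = 0 ∧ v e = 0) (k : ℕ) : x k ≠ x (k + 1) := by
  intro hx
  have hdiag := hloop _ (Sym2.mk_isDiag_iff.mpr hx)
  rcases Nat.even_or_odd k with hk | hk
  · exact ht.apply_edge_ne_zero_of_even hk hdiag.1
  · exact ht.apply_edge_ne_zero_of_odd hk hdiag.2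

lemma ne_add_two (ht : IsAlternatingTour x L u v) (hp : IsPrimitivePair degVec u v) (k : ℕ) :
    x k ≠ x (k + 2) := by
  intro hx
  have hedge : s(x (k + 1), x (k + 1 + 1)) = s(x k, x (k + 1)) := by
    rw [← hx, Sym2.eq_swap]
  rcases Nat.even_or_odd k with hk | hk
  · have hv := ht.apply_edge_ne_zero_of_odd hk.add_one
    rw [hedge] at hv
    exact (hp.apply_eq_zero_or _).elim (ht.apply_edge_ne_zero_of_even hk) hv
  · have hu := ht.apply_edge_ne_zero_of_even hk.add_one
    rw [hedge] at hu
    exact (hp.apply_eq_zero_or _).elim hu (ht.apply_edge_ne_zero_of_odd hk)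

lemma four_le (ht : IsAlternatingTour x L u v) (hp : IsPrimitivePair degVec u v) : 4 ≤ L := by
  obtain ⟨c, hc⟩ := ht.even
  have hL2 : L ≠ 2 := fun h => ht.ne_add_two hp 0 (by rw [zero_add, ← h, ht.periodic.eq])
  have := ht.pos
  omega

end IsAlternatingTour

section CyclicWord

open Finset

lemma Finset.card_add_card_filter_unique_le {ι α : Type*} [DecidableEq ι] [DecidableEq α]
    (s : Finset ι) (f : ι → α) (h2 : ∀ y, #{i ∈ s | f i = y} ≤ 2) :
    #s + #{j ∈ s | ∀ i ∈ s, f i = f j → i = j} ≤ 2 * #(s.image f) := by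
  set S := {j ∈ s | ∀ i ∈ s, f i = f j → i = j}
  rw [card_eq_sum_card_fiberwise fun i hi => mem_image_of_mem f hi,
    card_eq_sum_card_fiberwise (s := S) fun i hi =>
      mem_image_of_mem f (mem_filter.mp hi).1,
    ← sum_add_distrib, mul_comm, ← smul_eq_mul, ← sum_const]
  refine sum_le_sum fun y _ => ?_
  rcases eq_empty_or_nonempty {j ∈ S | f j = y} with hS | ⟨j, hj⟩
  · rw [hS, card_empty, add_zero]
    exact h2 y
  · simp only [S, mem_filter] at hj
    have hfib : {i ∈ s | f i = y} = {j} := by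
      refine eq_singleton_iff_unique_mem.mpr ⟨mem_filter.mpr ⟨hj.1.1, hj.2⟩, fun i hi => ?_⟩
      rw [mem_filter] at hi
      exact hj.1.2 i hi.1 (hi.2.trans hj.2.symm)
    have hsub : {j ∈ S | f j = y} ⊆ {i ∈ s | f i = y} :=
      filter_subset_filter _ (filter_subset _ _)
    have := card_le_card hsub
    rw [hfib, card_singleton] at this ⊢
    omega

variable {α : Type*} {w : ℕ → α} {L : ℕ}

def OccursOncePerPeriod (w : ℕ → α) (L j : ℕ) : Prop :=
  ∀ i, j < i → i < j + L → w i ≠ w j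

lemma exists_innermost_repeat (hper : Function.Periodic w L)
    (hcross : ∀ k p l r, k < p → p < l → l < r → r < k + L → w k = w l → w p = w r → False)
    {k l : ℕ} (hkl : k < l) (hlk : l < k + L) (hw : w k = w l) :
    ∃ a b, k ≤ a ∧ a < b ∧ b ≤ l ∧ w a = w b ∧
      ∀ j, a < j → j < b → OccursOncePerPeriod w L j := by
  induction hn : l - k using Nat.strong_induction_on generalizing k l with
  | _ n ih =>
  by_cases hall : ∀ j, k < j → j < l → OccursOncePerPeriod w L j
  · exact ⟨k, l, le_rfl, hkl, le_rfl, hw, hall⟩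
  simp only [OccursOncePerPeriod, not_forall, not_not] at hall
  obtain ⟨j, hkj, hjl, i, hji, hij, hwij⟩ := hall
  obtain ⟨k', l', hk', hl', hgap, hkl', hlk', hw'⟩ : ∃ k' l', k ≤ k' ∧ l' ≤ l ∧ l' - k' < n ∧
      k' < l' ∧ l' < k' + L ∧ w k' = w l' := by
    rcases lt_trichotomy i l with hil | rfl | hli
    · exact ⟨j, i, by omega, by omega, by omega, hji, hij, hwij.symm⟩
    · exact ⟨k, j, le_rfl, by omega, by omega, hkj, by omega, hw.trans hwij⟩
    rcases lt_trichotomy i (k + L) with hik | rfl | hki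
    · exact (hcross k j l i hkj hjl hli hik hw hwij.symm).elim
    · exact ⟨k, j, le_rfl, by omega, by omega, hkj, by omega, (hper k).symm.trans hwij⟩
    · refine ⟨i - L, j, by omega, by omega, by omega, by omega, by omega, ?_⟩
      rw [← hper (i - L), Nat.sub_add_cancel (by omega), hwij]
  obtain ⟨a, b, ha, hab, hb, hwab, hin⟩ := ih _ (hn ▸ hgap) hkl' hlk' hw' rfl
  exact ⟨a, b, hk'.trans ha, hab, hb.trans hl', hwab, hin⟩

open scoped Classical in
lemma add_card_occursOncePerPeriod_le [DecidableEq α] (hper : Function.Periodic w L)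
    (hodd : ∀ k l, k < l → l < k + L → w k = w l → Odd (l - k)) (s : ℕ) :
    L + #{j ∈ Ico s (s + L) | OccursOncePerPeriod w L j} ≤
      2 * #((range L).image w) := by
  have hpar : ∀ {i j}, i ∈ Ico s (s + L) → j ∈ Ico s (s + L) → i ≠ j → w i = w j →
      i % 2 ≠ j % 2 := by
    intro i j hi hj hij hw
    rw [mem_Ico] at hi hj
    rcases hij.lt_or_gt with h | h
    · have := Nat.odd_iff.mp (hodd i j h (by omega) hw)
      omega
    · have := Nat.odd_iff.mp (hodd j i h (by omega) hw.symm)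
      omega
  have hfib : ∀ y, #{i ∈ Ico s (s + L) | w i = y} ≤ 2 := by
    intro y
    by_contra! h
    obtain ⟨a, ha, b, hb, c, hc, hab, hac, hbc⟩ := two_lt_card.mp h
    simp only [mem_filter] at ha hb hc
    have := hpar ha.1 hb.1 hab (ha.2.trans hb.2.symm)
    have := hpar ha.1 hc.1 hac (ha.2.trans hc.2.symm)
    have := hpar hb.1 hc.1 hbc (hb.2.trans hc.2.symm)
    omega
  have hunique : {j ∈ Ico s (s + L) | OccursOncePerPeriod w L j} ⊆
      {j ∈ Ico s (s + L) | ∀ i ∈ Ico s (s + L), w i = w j → i = j} := by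
    intro j hj
    rw [mem_filter] at hj ⊢
    obtain ⟨hjs, hone⟩ := hj
    refine ⟨hjs, fun i hi hw => ?_⟩
    rw [mem_Ico] at hi hjs
    rcases lt_trichotomy i j with hij | rfl | hji
    · exact (hone (i + L) (by omega) (by omega) ((hper i).trans hw)).elim
    · rfl
    · exact (hone i hji (by omega) hw).elim
  have himage : (Ico s (s + L)).image w ⊆ (range L).image w := by
    intro y hy
    obtain ⟨j, -, rfl⟩ := mem_image.mp hy
    rcases Nat.eq_zero_or_pos L with rfl | hL
    · simp at hy
    exact mem_image.mpr ⟨j % L, mem_range.mpr (Nat.mod_lt j hL), hper.map_mod_nat j⟩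
  have := Finset.card_add_card_filter_unique_le _ w hfib
  have := card_le_card hunique
  have := card_le_card himage
  rw [Nat.card_Ico, Nat.add_sub_cancel_left] at *
  omega

open scoped Classical in
theorem add_four_le_two_mul_card_image [DecidableEq α] (hL : 4 ≤ L)
    (hper : Function.Periodic w L) (hodd : ∀ k l, k < l → l < k + L → w k = w l → Odd (l - k))
    (hcross : ∀ k p l r, k < p → p < l → l < r → r < k + L → w k = w l → w p = w r → False)
    (hne1 : ∀ k, w k ≠ w (k + 1)) (hne2 : ∀ k, w k ≠ w (k + 2)) :
    L + 4 ≤ 2 * #((range L).image w) := by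
  have hgap : ∀ a b, a < b → w a = w b → a + 3 ≤ b := by
    intro a b hab hw
    by_contra! h
    obtain rfl | rfl : b = a + 1 ∨ b = a + 2 := by omega
    exacts [hne1 a hw, hne2 a hw]
  by_cases hall : ∀ j < L, OccursOncePerPeriod w L j
  · have h := add_card_occursOncePerPeriod_le hper hodd 0
    rw [zero_add, filter_true_of_mem fun j hj => hall j (mem_Ico.mp hj).2,
      Nat.card_Ico] at h
    omega
  simp only [OccursOncePerPeriod, not_forall, not_not] at hall
  obtain ⟨j, -, i, hji, hij, hw⟩ := hall
  obtain ⟨a, b, hja, hab, hbi, hwab, hin⟩ :=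
    exists_innermost_repeat hper hcross hji hij hw.symm
  obtain ⟨a', b', hba', hab', hb'a, hwab', hin'⟩ :=
    exists_innermost_repeat hper hcross (k := b) (l := a + L) (by omega) (by omega)
      (hwab.symm.trans (hper a).symm)
  have := hgap a b hab hwab
  have := hgap a' b' hab' hwab'
  -- `(a, b)` and `(a', b')` are innermost on the two arcs cut out by `w a = w b`, and each
  -- encloses at least two letters occurring once per period
  have hfour : ({a + 1, a + 2, a' + 1, a' + 2} : Finset ℕ) ⊆
      {j ∈ Ico (a + 1) (a + 1 + L) | OccursOncePerPeriod w L j} := by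
    intro j hj
    simp only [mem_insert, mem_singleton] at hj
    refine mem_filter.mpr ⟨mem_Ico.mpr (by omega), ?_⟩
    rcases hj with rfl | rfl | rfl | rfl
    exacts [hin _ (by omega) (by omega), hin _ (by omega) (by omega),
      hin' _ (by omega) (by omega), hin' _ (by omega) (by omega)]
  have hcard : #({a + 1, a + 2, a' + 1, a' + 2} : Finset ℕ) = 4 := by
    rw [card_insert_of_notMem (by simp; omega), card_insert_of_notMem (by simp; omega),
      card_pair (by omega)]
  have := card_le_card hfour
  have := add_card_occursOncePerPeriod_le hper hodd (a + 1)
  omega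

end CyclicWord

theorem IsPrimitivePair.degree_le_card_sub_two [Fintype V] {u v : Sym2 V →₀ ℕ}
    (hp : IsPrimitivePair degVec u v) (hloop : ∀ e : Sym2 V, e.IsDiag → u e = 0 ∧ v e = 0) :
    u.degree ≤ Fintype.card V - 2 := by
  classical
  obtain ⟨x, L, ht⟩ := hp.exists_isAlternatingTour
  have hword := add_four_le_two_mul_card_image (ht.four_le hp) ht.periodic
    (fun _ _ => ht.odd_sub_of_eq hp) (fun _ _ _ _ => ht.not_crossing hp) (ht.ne_succ hloop)
    (ht.ne_add_two hp)
  have hcard := Finset.card_le_univ ((Finset.range L).image x)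
  have hsum := ht.degree_add_degree
  have heq := degree_eq_of_degVec_eq hp.2.1
  omega

theorem degree_le_of_mem_universalGB_general {V : Type*} [Fintype V] (G : SimpleGraph V)
    (m : ℕ) (hm : Fintype.card V = m)
    (K : Type*) [Field K] :
    ∀ f ∈ UniversalGB (graphToricIdeal K G), f.totalDegree ≤ m - 2 := by
  intro f hf
  obtain ⟨u, v, hp, rfl⟩ :=
    exists_isPrimitivePair_of_mem_universalGB (isMonomialMap_aeval_edgeImage (K := K) G) hf
  have hp' := hp.mapDomain Subtype.val_injective
  have hloop : ∀ e : Sym2 V, e.IsDiag →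
      u.mapDomain Subtype.val e = 0 ∧ v.mapDomain Subtype.val e = 0 := by
    intro e he
    have hrange : e ∉ Set.range (Subtype.val : G.edgeSet → Sym2 V) := by
      rintro ⟨e', rfl⟩
      exact G.not_isDiag_of_mem_edgeSet e'.2 he
    exact ⟨Finsupp.mapDomain_of_notMem_range _ _ hrange,
      Finsupp.mapDomain_of_notMem_range _ _ hrange⟩
  calc (binom K u v).totalDegree ≤ max u.degree v.degree := totalDegree_binom_le u v
    _ = (u.mapDomain Subtype.val).degree := by
      rw [← Finsupp.degree_mapDomain Subtype.val u, ← Finsupp.degree_mapDomain Subtype.val v,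
        ← degree_eq_of_degVec_eq hp'.2.1, max_self]
    _ ≤ m - 2 := hm ▸ hp'.degree_le_card_sub_two hloop

/-- For a finite simple connected graph `G` with `m ≥ 4` vertices, every
binomial in the universal Gröbner basis of `I_G` has total degree at most `m - 2`. -/
theorem degree_le_of_mem_universalGB {V : Type*} [Fintype V] (G : SimpleGraph V)
    (hG : G.Connected) (m : ℕ) (hm : Fintype.card V = m) (h4 : 4 ≤ m)
    (K : Type*) [Field K] :
    ∀ f ∈ UniversalGB (graphToricIdeal K G), f.totalDegree ≤ m - 2 :=
  degree_le_of_mem_universalGB_general G m hm K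

end
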